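/- arXiv:math/0608745 — 7 statements merged into one kernel-verified Lean document; each statement's English description precedes it below -/
import Mathlib

section
/- For linearly independent p, a ∈ ℤ², the projection to the s-coordinate of the lattice points ℤ² lying in the half-open parallelogram {t·p + s·a : t,s ∈ [0,1)} is exactly the set {i/κ : i = 0, …, κ−1}, where κ = |p₁a₂ − p₂a₁| / gcd(p₁,p₂). -/
/-- Auxiliary: if the two "Cramer" equations hold, the point decomposes in the basis. -/
lemma key_coord (p a v : Fin 2 → ℤ) (t s : ℝ)
    (hd : ((p 0 * a 1 - p 1 * a 0 : ℤ) : ℝ) ≠ 0)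
    (hM : ((a 1 * v 0 - a 0 * v 1 : ℤ) : ℝ) = t * ((p 0 * a 1 - p 1 * a 0 : ℤ) : ℝ))
    (hN : ((p 0 * v 1 - p 1 * v 0 : ℤ) : ℝ) = s * ((p 0 * a 1 - p 1 * a 0 : ℤ) : ℝ)) :
    ∀ i, (v i : ℝ) = t * p i + s * a i := by
  intro i
  push_cast at hM hN
  fin_cases i
  · refine mul_right_cancel₀ hd ?_
    push_cast
    linear_combination (p 0 : ℝ) * hM + (a 0 : ℝ) * hN
  · refine mul_right_cancel₀ hd ?_
    push_cast
    linear_combination (p 1 : ℝ) * hM + (a 1 : ℝ) * hN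

set_option maxHeartbeats 1000000 in
/-- For linearly independent p, a ∈ ℤ², the projection to the s-coordinate of the lattice
points ℤ² lying in the half-open parallelogram {t·p + s·a : t,s ∈ [0,1)} is exactly the set
{i/κ : i = 0, …, κ−1}, where κ = |p₁a₂ − p₂a₁| / gcd(p₁,p₂). -/
theorem parallelogram_s_projection (p a : Fin 2 → ℤ)
    (h : LinearIndependent ℝ ![(fun i => (p i : ℝ)), (fun i => (a i : ℝ))]) :
    {s : ℝ | ∃ t : ℝ, 0 ≤ t ∧ t < 1 ∧ 0 ≤ s ∧ s < 1 ∧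
        ∃ v : Fin 2 → ℤ, ∀ i, (v i : ℝ) = t * p i + s * a i}
      = {x : ℝ | ∃ i : ℕ,
          i < (p 0 * a 1 - p 1 * a 0).natAbs / Int.gcd (p 0) (p 1) ∧
          x = (i : ℝ) / ((p 0 * a 1 - p 1 * a 0).natAbs / Int.gcd (p 0) (p 1) : ℕ)} := by
  have hcomb : ∀ s t : ℝ, s * p 0 + t * a 0 = 0 → s * p 1 + t * a 1 = 0 →
      s = 0 ∧ t = 0 := by
    intro s t h0 h1
    refine LinearIndependent.pair_iff.mp h s t ?_
    funext i
    fin_cases i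
    · simpa using h0
    · simpa using h1
  set d : ℤ := p 0 * a 1 - p 1 * a 0 with hdd
  have hd : d ≠ 0 := by
    intro h0
    by_cases h1 : (p 1 : ℝ) = 0 ∧ (a 1 : ℝ) = 0
    · by_cases h2 : (p 0 : ℝ) = 0 ∧ (a 0 : ℝ) = 0
      · have := hcomb 1 0 (by rw [h2.1, h2.2]; ring) (by rw [h1.1, h1.2]; ring)
        exact one_ne_zero this.1
      · have := hcomb (a 0) (-(p 0)) (by ring) (by rw [h1.1, h1.2]; ring)
        exact h2 ⟨by simpa using this.2, this.1⟩
    · have hcast : (p 0 : ℝ) * a 1 - p 1 * a 0 = 0 := by exact_mod_cast congrArg Int.cast h0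
      have := hcomb (a 1) (-(p 1)) (by linear_combination hcast) (by ring)
      exact h1 ⟨by simpa using this.2, this.1⟩
  set g : ℕ := Int.gcd (p 0) (p 1) with hgdef
  have hgd : (g : ℤ) ∣ d := by
    exact dvd_sub ((Int.gcd_dvd_left (p 0) (p 1)).mul_right _)
      ((Int.gcd_dvd_right (p 0) (p 1)).mul_right _)
  set κ : ℕ := d.natAbs / g with hκdef
  have hgn : g ∣ d.natAbs := by
    have := Int.natAbs_dvd_natAbs.mpr hgd
    simpa using this
  have hκ : (κ : ℤ) * g = |d| := by
    rw [hκdef]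
    have := Nat.div_mul_cancel hgn
    rw [Int.abs_eq_natAbs]
    exact_mod_cast this
  have hgpos : 0 < g := by
    rcases Nat.eq_zero_or_pos g with h0 | h0
    · exfalso
      apply hd
      have hz : Int.gcd (p 0) (p 1) = 0 := by rw [← hgdef]; exact h0
      have h00 := (Int.gcd_eq_zero_iff.mp hz).1
      have h01 := (Int.gcd_eq_zero_iff.mp hz).2
      rw [hdd, h00, h01]; ring
    · exact h0
  have hκpos : 0 < κ := by
    rcases Nat.eq_zero_or_pos κ with h0 | h0
    · exfalso
      apply hd
      have : |d| = 0 := by rw [← hκ, h0]; simp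
      exact abs_eq_zero.mp this
    · exact h0
  have hdR : ((d : ℤ) : ℝ) ≠ 0 := Int.cast_ne_zero.mpr hd
  have hκR : ((κ : ℕ) : ℝ) ≠ 0 := Nat.cast_ne_zero.mpr hκpos.ne'
  have hgR : ((g : ℕ) : ℝ) ≠ 0 := Nat.cast_ne_zero.mpr hgpos.ne'
  ext x
  simp only [Set.mem_setOf_eq]
  constructor
  · rintro ⟨t, ht0, ht1, hx0, hx1, v, hv⟩
    have hv0 := hv 0
    have hv1 := hv 1
    have hN : ((p 0 * v 1 - p 1 * v 0 : ℤ) : ℝ) = x * d := by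
      rw [hdd]
      push_cast
      linear_combination (p 0 : ℝ) * hv1 - (p 1 : ℝ) * hv0
    have hgN : (g : ℤ) ∣ (p 0 * v 1 - p 1 * v 0) :=
      dvd_sub ((Int.gcd_dvd_left (p 0) (p 1)).mul_right _)
        ((Int.gcd_dvd_right (p 0) (p 1)).mul_right _)
    obtain ⟨m, hm⟩ := hgN
    set N : ℤ := p 0 * v 1 - p 1 * v 0 with hNdef
    rcases hd.lt_or_gt with hdneg | hdpos
    · -- d < 0
      have hdκ : d = -((κ : ℤ) * g) := by rw [hκ, abs_of_neg hdneg]; ring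
      have hN1 : (N : ℝ) ≤ 0 := by
        rw [hN]
        have : (d : ℝ) < 0 := by exact_mod_cast hdneg
        nlinarith
      have hN2 : (d : ℝ) < (N : ℝ) := by
        rw [hN]
        have : (d : ℝ) < 0 := by exact_mod_cast hdneg
        nlinarith
      have hNle : N ≤ 0 := by exact_mod_cast hN1
      have hNgt : d < N := by exact_mod_cast hN2
      have hm0 : m ≤ 0 := by
        by_contra hc
        push_neg at hc
        have : (0:ℤ) < N := by
          rw [hm]
          positivity
        omega
      have hmκ : -m < κ := by
        have : -((κ:ℤ) * g) < (g:ℤ) * m := by rw [← hdκ, ← hm]; exact hNgt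
        nlinarith [hgpos, (by exact_mod_cast hgpos : (0:ℤ) < (g:ℤ))]
      refine ⟨(-m).toNat, by omega, ?_⟩
      have hcast : (((-m).toNat : ℕ) : ℝ) = -(m : ℝ) := by
        have : ((-m).toNat : ℤ) = -m := Int.toNat_of_nonneg (by omega)
        exact_mod_cast this
      rw [hcast]
      rw [eq_div_iff hκR]
      refine mul_right_cancel₀ hgR ?_
      have hx' : x * d = (g : ℝ) * m := by
        rw [← hN, hm]; push_cast; ring
      have hdcast : ((d:ℤ):ℝ) = -(((κ:ℕ):ℝ) * g) := by exact_mod_cast congrArg Int.cast hdκ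
      linear_combination x * hdcast - hx'
    · -- d > 0
      have hdκ : d = (κ : ℤ) * g := by rw [hκ, abs_of_pos hdpos]
      have hN1 : (0:ℝ) ≤ (N : ℝ) := by
        rw [hN]
        have : (0:ℝ) < (d : ℝ) := by exact_mod_cast hdpos
        positivity
      have hN2 : (N : ℝ) < (d : ℝ) := by
        rw [hN]
        have : (0:ℝ) < (d : ℝ) := by exact_mod_cast hdpos
        nlinarith
      have hNge : 0 ≤ N := by exact_mod_cast hN1
      have hNlt : N < d := by exact_mod_cast hN2
      have hm0 : 0 ≤ m := by
        by_contra hc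
        push_neg at hc
        have : N < 0 := by
          rw [hm]
          have hgz : (0:ℤ) < (g:ℤ) := by exact_mod_cast hgpos
          nlinarith
        omega
      have hmκ : m < κ := by
        have : (g:ℤ) * m < (κ:ℤ) * g := by rw [← hdκ, ← hm]; exact hNlt
        nlinarith [(by exact_mod_cast hgpos : (0:ℤ) < (g:ℤ))]
      refine ⟨m.toNat, by omega, ?_⟩
      have hcast : ((m.toNat : ℕ) : ℝ) = (m : ℝ) := by
        have : (m.toNat : ℤ) = m := Int.toNat_of_nonneg hm0
        exact_mod_cast this
      rw [hcast]
      rw [eq_div_iff hκR]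
      refine mul_right_cancel₀ hgR ?_
      have hx' : x * d = (g : ℝ) * m := by
        rw [← hN, hm]; push_cast; ring
      have hdcast : ((d:ℤ):ℝ) = ((κ:ℕ):ℝ) * g := by exact_mod_cast congrArg Int.cast hdκ
      linear_combination hx' - x * hdcast
  · rintro ⟨i, hiκ, rfl⟩
    set A : ℤ := Int.gcdA (p 0) (p 1) with hA
    set B : ℤ := Int.gcdB (p 0) (p 1) with hB
    have hbez : (g : ℤ) = p 0 * A + p 1 * B := Int.gcd_eq_gcd_ab (p 0) (p 1)
    set q0 : ℤ := p 0 / (g : ℤ) with hq0def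
    set q1 : ℤ := p 1 / (g : ℤ) with hq1def
    have hq0 : (g : ℤ) * q0 = p 0 := by
      rw [hq0def, hgdef]; exact Int.mul_ediv_cancel' (Int.gcd_dvd_left (p 0) (p 1))
    have hq1 : (g : ℤ) * q1 = p 1 := by
      rw [hq1def, hgdef]; exact Int.mul_ediv_cancel' (Int.gcd_dvd_right (p 0) (p 1))
    set ε : ℤ := if 0 < d then 1 else -1 with hε
    have hεd : d = ε * ((κ : ℤ) * g) := by
      rcases hd.lt_or_gt with hdneg | hdpos
      · rw [hε, if_neg (by omega), hκ, abs_of_neg hdneg]; ring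
      · rw [hε, if_pos hdpos, hκ, abs_of_pos hdpos]; ring
    set c : ℤ := a 1 * (-B) - a 0 * A with hc
    set D : ℤ := q0 * a 1 - q1 * a 0 with hD
    have hGD : (g : ℤ) * D = d := by
      rw [hD, hdd]
      linear_combination (a 1 : ℤ) * hq0 - (a 0 : ℤ) * hq1
    set t0 : ℝ := ((ε * i * c : ℤ) : ℝ) / ((d : ℤ) : ℝ) with ht0def
    set k : ℤ := -⌊((g : ℕ) : ℝ) * t0⌋ with hk
    set v : Fin 2 → ℤ := ![ε * i * (-B) + k * q0, ε * i * A + k * q1] with hvdef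
    have hv0 : v 0 = ε * i * (-B) + k * q0 := rfl
    have hv1 : v 1 = ε * i * A + k * q1 := rfl
    set Mv : ℤ := ε * i * c + k * D with hMvdef
    set t : ℝ := ((Mv : ℤ) : ℝ) / ((d : ℤ) : ℝ) with htdef
    have hNv : p 0 * v 1 - p 1 * v 0 = ε * i * (g : ℤ) := by
      rw [hv0, hv1]
      linear_combination (ε * (i:ℤ)) * hbez.symm + (k * q0) * hq1 - (k * q1) * hq0
    have hMv : a 1 * v 0 - a 0 * v 1 = Mv := by
      rw [hv0, hv1, hMvdef, hc, hD]
      ring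
    have htd : t * ((d : ℤ) : ℝ) = ((Mv : ℤ) : ℝ) := div_mul_cancel₀ _ hdR
    have ht0d : t0 * ((d : ℤ) : ℝ) = ((ε * i * c : ℤ) : ℝ) := div_mul_cancel₀ _ hdR
    have hGDr : ((g : ℕ) : ℝ) * ((D : ℤ) : ℝ) = ((d : ℤ) : ℝ) := by
      exact_mod_cast congrArg Int.cast hGD
    have hGt : ((g : ℕ) : ℝ) * t = Int.fract (((g : ℕ) : ℝ) * t0) := by
      rw [Int.fract]
      refine mul_right_cancel₀ hdR ?_
      have e1 : (((g:ℕ):ℝ) * t) * ((d : ℤ) : ℝ) = ((g:ℕ):ℝ) * ((Mv:ℤ):ℝ) := by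
        rw [mul_assoc, htd]
      have e2 : ((((g:ℕ):ℝ) * t0 - (⌊((g:ℕ):ℝ) * t0⌋ : ℝ))) * ((d : ℤ) : ℝ)
          = ((g:ℕ):ℝ) * ((ε * i * c : ℤ):ℝ) + ((k:ℤ):ℝ) * ((d : ℤ) : ℝ) := by
        rw [sub_mul, mul_assoc, ht0d, hk]
        push_cast
        ring
      rw [e1, e2]
      have : ((Mv : ℤ) : ℝ) = ((ε * i * c : ℤ) : ℝ) + ((k:ℤ):ℝ) * ((D:ℤ):ℝ) := by
        rw [hMvdef]; push_cast; ring
      rw [this]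
      linear_combination ((k:ℤ):ℝ) * hGDr
    have ht0' : 0 ≤ t := by
      have h1 : 0 ≤ ((g:ℕ):ℝ) * t := by rw [hGt]; exact Int.fract_nonneg _
      have h2 : (0:ℝ) < ((g:ℕ):ℝ) := by exact_mod_cast hgpos
      nlinarith
    have ht1' : t < 1 := by
      have h1 : ((g:ℕ):ℝ) * t < 1 := by rw [hGt]; exact Int.fract_lt_one _
      have h2 : (1:ℝ) ≤ ((g:ℕ):ℝ) := by exact_mod_cast hgpos
      nlinarith
    have hx0' : (0:ℝ) ≤ (i : ℝ) / (κ : ℝ) := by positivity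
    have hx1' : (i : ℝ) / (κ : ℝ) < 1 := by
      rw [div_lt_one (by exact_mod_cast hκpos)]
      exact_mod_cast hiκ
    refine ⟨t, ht0', ht1', hx0', hx1', v, ?_⟩
    refine key_coord p a v t ((i : ℝ) / (κ : ℝ)) (by rw [← hdd]; exact hdR) ?_ ?_
    · rw [← hdd, hMv]
      exact htd.symm
    · rw [← hdd, hNv]
      have hdcast : ((d : ℤ) : ℝ) = ((ε:ℤ):ℝ) * (((κ:ℕ):ℝ) * ((g:ℕ):ℝ)) := by
        exact_mod_cast congrArg Int.cast hεd
      rw [hdcast]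
      push_cast
      field_simp
end

section
/- For linearly independent p, a ∈ ℤⁿ with gcd(p₁,…,pₙ) = 1, the number of lattice points of ℤⁿ in the half-open parallelogram spanned by p and a equals gcd{pᵢaⱼ − pⱼaᵢ : 1 ≤ i < j ≤ n}. -/
lemma bezout_finset {ι : Type*} [DecidableEq ι] (t : Finset ι) (f : ι → ℤ) :
    ∃ q : ι → ℤ, ∑ i ∈ t, q i * f i = t.gcd f := by
  classical
  refine Finset.induction_on t ⟨0, by simp⟩ (fun i s hnot ih => ?_)
  obtain ⟨q, hq⟩ := ih
  refine ⟨fun j => if j = i then Int.gcdA (f i) (s.gcd f)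
    else Int.gcdB (f i) (s.gcd f) * q j, ?_⟩
  rw [Finset.sum_insert hnot, Finset.gcd_insert]
  have h1 : GCDMonoid.gcd (f i) (s.gcd f) = (Int.gcd (f i) (s.gcd f) : ℤ) := by
    rw [Int.coe_gcd]
  rw [h1, Int.gcd_eq_gcd_ab]
  have h2 : ∀ j ∈ s, (fun j => if j = i then Int.gcdA (f i) (s.gcd f)
      else Int.gcdB (f i) (s.gcd f) * q j) j * f j
      = Int.gcdB (f i) (s.gcd f) * (q j * f j) := fun j hj => by
    dsimp only; rw [if_neg (show ¬ j = i from fun h => hnot (h ▸ hj))]; ring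
  rw [Finset.sum_congr rfl h2, ← Finset.mul_sum, hq]
  rw [show (fun j => if j = i then Int.gcdA (f i) (s.gcd f)
      else Int.gcdB (f i) (s.gcd f) * q j) i = Int.gcdA (f i) (s.gcd f) from if_pos rfl]
  ring

lemma den_dvd_of_mul_int {q : ℚ} {m c : ℤ} (h : q * (m:ℚ) = (c:ℚ)) : (q.den : ℤ) ∣ m := by
  have h1 : (q.num : ℚ) * m = c * q.den := by
    rw [← Rat.num_div_den q] at h
    field_simp at h
    rw [mul_comm (c:ℚ)]
    exact_mod_cast h
  have h1' : q.num * m = c * q.den := by exact_mod_cast h1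
  have hcop : IsCoprime (q.den : ℤ) q.num := by
    rw [Int.isCoprime_iff_gcd_eq_one]
    simpa [Int.gcd, Nat.coprime_comm] using q.reduced.symm
  exact hcop.dvd_of_dvd_mul_left ⟨c, by linarith [h1']⟩

/-- For linearly independent p, a ∈ ℤⁿ with gcd(p₁,…,pₙ) = 1, the number of lattice points
of ℤⁿ in the half-open parallelogram spanned by p and a equals
gcd{pᵢaⱼ − pⱼaᵢ : 1 ≤ i < j ≤ n}. -/
theorem lattice_points_in_parallelogram_n (n : ℕ) (hn : 2 ≤ n) (p a : Fin n → ℤ)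
    (hli : LinearIndependent ℝ ![(fun i => (p i : ℝ)), (fun i => (a i : ℝ))])
    (hgcd : Finset.univ.gcd p = 1) :
    ({v : Fin n → ℤ | ∃ t s : ℝ, 0 ≤ t ∧ t < 1 ∧ 0 ≤ s ∧ s < 1 ∧
        ∀ i, (v i : ℝ) = t * p i + s * a i}.ncard : ℤ)
      = (Finset.univ.filter (fun ij : Fin n × Fin n => ij.1 < ij.2)).gcd
          (fun ij => p ij.1 * a ij.2 - p ij.2 * a ij.1) := by
  classical
  set S : Set (Fin n → ℤ) := {v : Fin n → ℤ | ∃ t s : ℝ, 0 ≤ t ∧ t < 1 ∧ 0 ≤ s ∧ s < 1 ∧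
      ∀ i, (v i : ℝ) = t * p i + s * a i} with hSdef
  set G : ℤ := (Finset.univ.filter (fun ij : Fin n × Fin n => ij.1 < ij.2)).gcd
      (fun ij => p ij.1 * a ij.2 - p ij.2 * a ij.1) with hGdef
  -- linear independence in concrete form
  have key : ∀ x y : ℝ, (∀ i : Fin n, x * (p i:ℝ) + y * (a i:ℝ) = 0) → x = 0 ∧ y = 0 := by
    intro x y h
    rw [LinearIndependent.pair_iff] at hli
    refine hli x y (funext fun i => ?_)
    simpa [Pi.add_apply, Pi.smul_apply, smul_eq_mul] using h i
  -- Bezout for p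
  obtain ⟨q, hq⟩ := bezout_finset (Finset.univ : Finset (Fin n)) p
  rw [hgcd] at hq
  set lam : ℤ := ∑ i, q i * a i with hlamdef
  have hmdvd : ∀ i j : Fin n, G ∣ p i * a j - p j * a i := by
    intro i j
    rcases lt_trichotomy i j with h | h | h
    · exact Finset.gcd_dvd (Finset.mem_filter.mpr ⟨Finset.mem_univ (i, j), h⟩)
    · rw [h, sub_self]; exact dvd_zero G
    · have := Finset.gcd_dvd (f := fun ij : Fin n × Fin n => p ij.1 * a ij.2 - p ij.2 * a ij.1)
        (s := Finset.univ.filter (fun ij : Fin n × Fin n => ij.1 < ij.2))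
        (Finset.mem_filter.mpr ⟨Finset.mem_univ (j, i), h⟩)
      have h2 : p i * a j - p j * a i = -(p j * a i - p i * a j) := by ring
      rw [h2]
      exact dvd_neg.mpr this
  have hlam : ∀ j, G ∣ a j - lam * p j := by
    intro j
    have he : a j - lam * p j = ∑ i, q i * (p i * a j - p j * a i) := by
      have e1 : ∑ i, q i * (p i * a j - p j * a i)
          = (∑ i, q i * p i) * a j - (∑ i, q i * a i) * p j := by
        rw [Finset.sum_mul, Finset.sum_mul, ← Finset.sum_sub_distrib]
        exact Finset.sum_congr rfl fun i _ => by ring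
      rw [e1, hq, hlamdef]; ring
    rw [he]
    exact Finset.dvd_sum fun i _ => (hmdvd i j).mul_left (q i)
  clear_value lam
  -- a nonzero minor
  have hminor : ∃ i0 j0 : Fin n, i0 < j0 ∧ p i0 * a j0 - p j0 * a i0 ≠ 0 := by
    by_contra hcon
    push_neg at hcon
    have hall : ∀ i j : Fin n, p i * a j - p j * a i = 0 := by
      intro i j
      rcases lt_trichotomy i j with h | h | h
      · exact hcon i j h
      · rw [h]; ring
      · have := hcon j i h; linarith
    have hp0 : ∃ i0, p i0 ≠ 0 := by
      by_contra hp
      push_neg at hp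
      rw [show p = fun _ => (0:ℤ) from funext hp,
        Finset.gcd_eq_zero_iff.mpr (fun _ _ => rfl)] at hgcd
      exact absurd hgcd (by norm_num)
    obtain ⟨i0, hi0⟩ := hp0
    have := key (a i0 : ℝ) (-(p i0 : ℝ)) (fun i => by
      have := hall i i0
      have : (p i : ℝ) * a i0 - p i0 * a i = 0 := by exact_mod_cast this
      push_cast
      linarith)
    have : (p i0 : ℝ) = 0 := by linarith [this.2]
    exact hi0 (by exact_mod_cast this)
  have hGpos : 0 < G := by
    have hnn : 0 ≤ G := by
      have := Finset.normalize_gcd (s := Finset.univ.filter (fun ij : Fin n × Fin n => ij.1 < ij.2))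
        (f := fun ij => p ij.1 * a ij.2 - p ij.2 * a ij.1)
      rw [← hGdef] at this
      rw [← this, ← Int.abs_eq_normalize]
      exact abs_nonneg _
    rcases hnn.lt_or_eq with h | h
    · exact h
    · exfalso
      obtain ⟨i0, j0, hij, hm0⟩ := hminor
      exact hm0 (Finset.gcd_eq_zero_iff.mp h.symm (i0, j0)
        (Finset.mem_filter.mpr ⟨Finset.mem_univ _, hij⟩))
  obtain ⟨i0, j0, hij0, hm0⟩ := hminor
  have hGR : (0:ℝ) < (G:ℝ) := by exact_mod_cast hGpos
  set r : ℤ → ℤ := fun k => (-(k * lam)) % G with hrdef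
  have hrb : ∀ k : ℤ, 0 ≤ r k ∧ r k < G := fun k =>
    ⟨Int.emod_nonneg _ (ne_of_gt hGpos), Int.emod_lt_of_pos _ hGpos⟩
  have hdvdV : ∀ k : ℤ, ∀ i, G ∣ r k * p i + k * a i := by
    intro k i
    have e : r k * p i + k * a i
        = k * (a i - lam * p i) - G * ((-(k * lam)) / G * p i) := by
      simp only [hrdef]; rw [Int.emod_def]; ring
    rw [e]
    exact dvd_sub ((hlam i).mul_left k) (Dvd.intro _ rfl)
  set V : ℤ → Fin n → ℤ := fun k i => (r k * p i + k * a i) / G with hVdef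
  have hVval : ∀ k i, V k i * G = r k * p i + k * a i := fun k i =>
    Int.ediv_mul_cancel (hdvdV k i)
  -- membership of the V k
  have hmem : ∀ k : ℤ, 0 ≤ k → k < G → V k ∈ S := by
    intro k hk0 hk1
    rw [hSdef]
    refine ⟨(r k : ℝ) / G, (k : ℝ) / G, ?_, ?_, ?_, ?_, ?_⟩
    · exact div_nonneg (by exact_mod_cast (hrb k).1) hGR.le
    · exact (div_lt_one hGR).mpr (by exact_mod_cast (hrb k).2)
    · exact div_nonneg (by exact_mod_cast hk0) hGR.le
    · exact (div_lt_one hGR).mpr (by exact_mod_cast hk1)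
    · intro i
      have hR : ((V k i : ℤ):ℝ) * G = (r k : ℝ) * p i + (k:ℝ) * a i := by
        exact_mod_cast hVval k i
      rw [div_mul_eq_mul_div, div_mul_eq_mul_div, ← add_div,
        eq_div_iff (ne_of_gt hGR)]
      linarith
  -- surjectivity
  have hsur : ∀ v ∈ S, ∃ k : ℤ, 0 ≤ k ∧ k < G ∧ V k = v := by
    intro v hv
    rw [hSdef] at hv
    obtain ⟨t, s, ht0, ht1, hs0, hs1, hvts⟩ := hv
    set m0 : ℤ := p i0 * a j0 - p j0 * a i0 with hm0def
    have hm0R : (m0:ℝ) ≠ 0 := Int.cast_ne_zero.mpr hm0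
    have hrel : ∀ i j : Fin n,
        s * ((p i * a j - p j * a i : ℤ):ℝ) = ((p i * v j - p j * v i : ℤ):ℝ) := by
      intro i j; push_cast; rw [hvts i, hvts j]; ring
    have hrelt : t * (m0:ℝ) = ((a j0 * v i0 - a i0 * v j0 : ℤ):ℝ) := by
      simp only [hm0def]; push_cast; rw [hvts i0, hvts j0]; ring
    set sq : ℚ := ((p i0 * v j0 - p j0 * v i0 : ℤ):ℚ) / ((m0 : ℤ):ℚ) with hsqdef
    have hsqR : (sq:ℝ) = s := by
      have h1 := hrel i0 j0
      rw [← hm0def] at h1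
      push_cast at h1
      rw [hsqdef]
      push_cast
      rw [div_eq_iff hm0R]
      linarith
    have hdenG : ((sq.den : ℤ)) ∣ G := by
      rw [hGdef]
      apply Finset.dvd_gcd
      intro ij hij
      apply den_dvd_of_mul_int (c := p ij.1 * v ij.2 - p ij.2 * v ij.1)
      have h1 := hrel ij.1 ij.2
      rw [← hsqR] at h1
      exact_mod_cast h1
    have hden0 : ((sq.den:ℚ)) ≠ 0 := by exact_mod_cast sq.den_nz
    set k : ℤ := sq.num * (G / (sq.den:ℤ)) with hkdef
    have hkQ : (k:ℚ) = sq * (G:ℚ) := by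
      rw [hkdef]
      push_cast [Int.cast_div_charZero hdenG]
      conv_rhs => rw [← Rat.num_div_den sq]
      field_simp
    have hkR : (k:ℝ) = s * G := by
      have h2 : ((k:ℚ):ℝ) = ((sq * (G:ℚ) : ℚ):ℝ) := by rw [hkQ]
      push_cast at h2
      rw [hsqR] at h2
      exact h2
    have hk0 : 0 ≤ k := by
      have : (0:ℝ) ≤ (k:ℝ) := by rw [hkR]; exact mul_nonneg hs0 hGR.le
      exact_mod_cast this
    have hk1 : k < G := by
      have : (k:ℝ) < G := by rw [hkR]; nlinarith
      exact_mod_cast this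
    -- the t side
    set tq : ℚ := ((a j0 * v i0 - a i0 * v j0 : ℤ):ℚ) / ((m0 : ℤ):ℚ) with htqdef
    have htqR : (tq:ℝ) = t := by
      rw [htqdef]
      push_cast
      rw [div_eq_iff hm0R]
      push_cast at hrelt
      linarith
    have hden1 : (((tq * (G:ℚ)).den : ℤ)) ∣ (1:ℤ) := by
      rw [← hgcd]
      apply Finset.dvd_gcd
      intro i _
      apply den_dvd_of_mul_int (c := G * v i - k * a i)
      have hR : ((tq * (G:ℚ)):ℝ) * (p i:ℝ) = ((G * v i - k * a i : ℤ):ℝ) := by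
        push_cast
        rw [htqR, hvts i, hkR]
        ring
      exact_mod_cast hR
    have hden1' : (tq * (G:ℚ)).den = 1 := by
      have : ((tq * (G:ℚ)).den : ℤ) = 1 := Int.eq_one_of_dvd_one (by positivity) hden1
      exact_mod_cast this
    set r' : ℤ := (tq * (G:ℚ)).num with hr'def
    have hr'Q : ((r' : ℤ):ℚ) = tq * (G:ℚ) := by
      conv_rhs => rw [← Rat.num_div_den (tq * (G:ℚ)), hden1']
      simp
      exact hr'def
    have hr'R : (r':ℝ) = t * G := by
      have h2 : ((r':ℚ):ℝ) = ((tq * (G:ℚ) : ℚ):ℝ) := by rw [hr'Q]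
      push_cast at h2
      rw [htqR] at h2
      exact h2
    have heq : ∀ i, r' * p i + k * a i = G * v i := by
      intro i
      have hR : ((r' * p i + k * a i : ℤ):ℝ) = ((G * v i : ℤ):ℝ) := by
        push_cast
        rw [hr'R, hkR, hvts i]
        ring
      exact_mod_cast hR
    have hcong : G ∣ r' + k * lam := by
      have h1 : ∀ i, G ∣ (r' + k * lam) * p i := by
        intro i
        have e : (r' + k * lam) * p i = (r' * p i + k * a i) - k * (a i - lam * p i) := by
          ring
        rw [e, heq i]
        exact dvd_sub (Dvd.intro _ rfl) ((hlam i).mul_left k)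
      have e2 : ∑ i, q i * ((r' + k * lam) * p i) = r' + k * lam := by
        have : ∑ i, q i * ((r' + k * lam) * p i) = (r' + k * lam) * ∑ i, q i * p i := by
          rw [Finset.mul_sum]; exact Finset.sum_congr rfl fun i _ => by ring
        rw [this, hq, mul_one]
      rw [← e2]
      exact Finset.dvd_sum fun i _ => (h1 i).mul_left (q i)
    have hr'0 : 0 ≤ r' := by
      have : (0:ℝ) ≤ (r':ℝ) := by rw [hr'R]; exact mul_nonneg ht0 hGR.le
      exact_mod_cast this
    have hr'1 : r' < G := by
      have : (r':ℝ) < G := by rw [hr'R]; nlinarith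
      exact_mod_cast this
    have hrk : r k = r' := by
      have hmod : (-(k * lam)) ≡ r' [ZMOD G] := by
        rw [Int.modEq_iff_dvd]
        have : r' - -(k * lam) = r' + k * lam := by ring
        rw [this]
        exact hcong
      have hmod2 : (-(k * lam)) % G = r' % G := hmod
      simp only [hrdef]
      rw [hmod2, Int.emod_eq_of_lt hr'0 hr'1]
    refine ⟨k, hk0, hk1, ?_⟩
    funext i
    have h1 := hVval k i
    rw [hrk, heq i] at h1
    exact mul_right_cancel₀ (ne_of_gt hGpos) (by rw [h1]; ring)
  -- injectivity
  have hinj : Set.InjOn V ↑(Finset.Ico (0:ℤ) G) := by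
    intro k _ k' _ hVkk
    have h1 : ∀ i : Fin n, ((r k - r k' : ℤ):ℝ) * p i + ((k - k' : ℤ):ℝ) * a i = 0 := by
      intro i
      have e1 := hVval k i
      have e2 := hVval k' i
      rw [hVkk] at e1
      have e3 : r k * p i + k * a i = r k' * p i + k' * a i := by rw [← e1, ← e2]
      have e4 : (r k : ℝ) * p i + (k:ℝ) * a i = (r k' : ℝ) * p i + (k':ℝ) * a i := by
        exact_mod_cast e3
      push_cast
      linarith
    have h2 := (key _ _ h1).2
    have h3 : ((k - k' : ℤ):ℝ) = 0 := h2
    have : k - k' = 0 := by exact_mod_cast h3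
    linarith
  have hSeq : S = ↑((Finset.Ico (0:ℤ) G).image V) := by
    ext v
    simp only [Finset.coe_image, Set.mem_image, Finset.mem_coe, Finset.mem_Ico]
    constructor
    · intro hv
      obtain ⟨k, hk0, hk1, hkv⟩ := hsur v hv
      exact ⟨k, ⟨hk0, hk1⟩, hkv⟩
    · rintro ⟨k, ⟨hk0, hk1⟩, rfl⟩
      exact hmem k hk0 hk1
  rw [hSeq, Set.ncard_coe_finset, Finset.card_image_of_injOn hinj, Int.card_Ico]
  simp [Int.toNat_of_nonneg hGpos.le]
end

section
/- The circle action z·g = zᵖ g z̄^q on SU(3) (with p,q ∈ ℤ³, Σpᵢ = Σqᵢ) has all isotropy groups finite if and only if p − q_σ ≠ 0 for every permutation σ ∈ S₃, where q_σ = (q_{σ(1)}, q_{σ(2)}, q_{σ(3)}). -/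
open Matrix

private lemma circle_infinite' : {z : ℂ | ‖z‖ = 1}.Infinite := by
  apply Set.infinite_of_injOn_mapsTo
    (f := fun t : ℝ => (Real.cos t : ℂ) + Real.sin t * Complex.I)
    (s := Set.Icc (-(Real.pi/2)) (Real.pi/2))
  · intro a ha b hb hab
    have him : Real.sin a = Real.sin b := by
      have := congrArg Complex.im hab
      simpa [Complex.sin_ofReal_re] using this
    exact Real.injOn_sin ha hb him
  · intro t _
    simp only [Set.mem_setOf_eq]
    rw [Complex.norm_add_mul_I]
    rw [Real.cos_sq_add_sin_sq]
    exact Real.sqrt_one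
  · rw [← Set.infinite_coe_iff]
    apply Set.Icc.infinite
    have := Real.pi_pos
    linarith

private lemma finite_zpow_eq_one' {n : ℤ} (hn : n ≠ 0) :
    {z : ℂ | z ^ n = 1}.Finite := by
  have h0 : (Polynomial.X ^ n.natAbs - Polynomial.C (1:ℂ)) ≠ 0 :=
    Polynomial.X_pow_sub_C_ne_zero (Int.natAbs_pos.mpr hn) 1
  refine (Polynomial.finite_setOf_isRoot h0).subset ?_
  intro z hz
  simp only [Set.mem_setOf_eq] at hz
  have hnat : z ^ n.natAbs = 1 := by
    rcases Int.natAbs_eq n with h | h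
    · rw [h, zpow_natCast] at hz; exact hz
    · rw [h, _root_.zpow_neg, zpow_natCast, inv_eq_one] at hz; exact hz
  simp [Polynomial.IsRoot, hnat]

/-- The circle action z·g = zᵖ g z̄^q on SU(3) (with p,q ∈ ℤ³, Σpᵢ = Σqᵢ) has all isotropy
groups finite if and only if p − q_σ ≠ 0 for every permutation σ ∈ S₃. -/
theorem eschenburg_almost_free_iff (p q : Fin 3 → ℤ)
    (hsum : ∑ i, p i = ∑ i, q i) :
    (∀ g : Matrix.specialUnitaryGroup (Fin 3) ℂ,
        {z : ℂ | ‖z‖ = 1 ∧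
          Matrix.diagonal (fun i => z ^ p i) * (g : Matrix (Fin 3) (Fin 3) ℂ) *
            Matrix.diagonal (fun i => (star z) ^ q i)
          = (g : Matrix (Fin 3) (Fin 3) ℂ)}.Finite)
    ↔ (∀ σ : Equiv.Perm (Fin 3), ∃ i, p i - q (σ i) ≠ 0) := by
  constructor
  · -- almost free → p ≠ q_σ
    intro hfin σ
    by_contra hcon
    push_neg at hcon
    -- hcon : ∀ i, p i - q (σ i) = 0
    set s : ℂ := ((Equiv.Perm.sign σ : ℤ) : ℂ) with hs
    have hss : s * s = 1 := by
      have h1 : ((Equiv.Perm.sign σ : ℤ)) * ((Equiv.Perm.sign σ : ℤ)) = 1 := by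
        rw [← Units.val_mul, Int.units_mul_self, Units.val_one]
      rw [hs, ← Int.cast_mul, h1, Int.cast_one]
    set c : Fin 3 → ℂ := fun i => if i = 0 then s else 1 with hcdef
    have hcc : ∀ i, c i * c i = 1 := by
      intro i
      by_cases h : i = 0 <;> simp [hcdef, h, hss]
    have hcstar : ∀ i, star (c i) = c i := by
      intro i
      by_cases h : i = 0 <;> simp [hcdef, h, hs]
    set M : Matrix (Fin 3) (Fin 3) ℂ := Matrix.diagonal c * σ.permMatrix ℂ with hMdef
    have hMe : ∀ i j, M i j = if σ i = j then c i else 0 := by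
      intro i j
      rw [hMdef, Matrix.diagonal_mul]
      simp [Equiv.Perm.permMatrix, PEquiv.toMatrix_apply, Equiv.toPEquiv, mul_ite]
    have hunit : M ∈ Matrix.unitaryGroup (Fin 3) ℂ := by
      rw [Matrix.mem_unitaryGroup_iff]
      ext i k
      rw [Matrix.mul_apply]
      rw [Finset.sum_eq_single_of_mem (σ i) (Finset.mem_univ _)]
      · rw [Matrix.star_apply, hMe, hMe]
        by_cases h : i = k
        · subst h
          have e1 : (if σ i = σ i then c i else 0) = c i := if_pos rfl
          rw [e1, hcstar i, hcc i, Matrix.one_apply_eq]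
        · have hne : σ k ≠ σ i := fun hh => h (σ.injective hh).symm
          rw [if_neg hne, star_zero, mul_zero, Matrix.one_apply_ne h]
      · intro b _ hb
        rw [hMe]
        simp [Ne.symm hb]
    have hdet : M.det = 1 := by
      rw [hMdef, Matrix.det_mul, Matrix.det_diagonal, Matrix.det_permutation]
      rw [Fin.prod_univ_three]
      simp only [hcdef]
      norm_num
      rw [← hs]
      exact hss
    have hmem : M ∈ Matrix.specialUnitaryGroup (Fin 3) ℂ :=
      Matrix.mem_specialUnitaryGroup_iff.mpr ⟨hunit, hdet⟩
    have hsub : {z : ℂ | ‖z‖ = 1} ⊆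
        {z : ℂ | ‖z‖ = 1 ∧
          Matrix.diagonal (fun i => z ^ p i) * M *
            Matrix.diagonal (fun i => (star z) ^ q i) = M} := by
      intro z hz
      refine ⟨hz, ?_⟩
      have hz1 : z * star z = 1 := by
        rw [Complex.star_def, Complex.mul_conj, Complex.normSq_eq_norm_sq, hz]
        norm_num
      ext i j
      rw [Matrix.mul_diagonal, Matrix.diagonal_mul, hMe]
      by_cases h : σ i = j
      · have hq : q j = p i := by
          have := hcon i
          rw [← h]; omega
        rw [if_pos h, hq]
        rw [mul_right_comm, ← mul_zpow, hz1, _root_.one_zpow, one_mul]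
      · rw [if_neg h]; ring
    exact Set.not_infinite.mpr (hfin ⟨M, hmem⟩) (circle_infinite'.mono hsub)
  · -- p ≠ q_σ → almost free
    intro hpq g
    have hdet : (g : Matrix (Fin 3) (Fin 3) ℂ).det = 1 :=
      (Matrix.mem_specialUnitaryGroup_iff.mp g.2).2
    have hex : ∃ σ : Equiv.Perm (Fin 3), ∏ i, (g : Matrix (Fin 3) (Fin 3) ℂ) (σ i) i ≠ 0 := by
      by_contra h
      push_neg at h
      have : (g : Matrix (Fin 3) (Fin 3) ℂ).det = 0 := by
        rw [Matrix.det_apply]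
        exact Finset.sum_eq_zero fun σ _ => by rw [h σ, smul_zero]
      rw [hdet] at this
      exact one_ne_zero this
    obtain ⟨σ, hσ⟩ := hex
    obtain ⟨i, hi⟩ := hpq σ⁻¹
    set k : Fin 3 := σ⁻¹ i with hk
    have hgik : (g : Matrix (Fin 3) (Fin 3) ℂ) i k ≠ 0 := by
      have : (g : Matrix (Fin 3) (Fin 3) ℂ) (σ k) k ≠ 0 :=
        Finset.prod_ne_zero_iff.mp hσ k (Finset.mem_univ k)
      rwa [hk, ← Equiv.Perm.mul_apply, mul_inv_cancel, Equiv.Perm.one_apply] at this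
    set n : ℤ := p i - q k with hn
    have hn0 : n ≠ 0 := hi
    apply (finite_zpow_eq_one' hn0).subset
    rintro z ⟨hz, heq⟩
    have hz0 : z ≠ 0 := by
      intro h; rw [h] at hz; simp at hz
    have hentry : z ^ p i * (g : Matrix (Fin 3) (Fin 3) ℂ) i k * (star z) ^ q k
        = (g : Matrix (Fin 3) (Fin 3) ℂ) i k := by
      have := congrFun (congrFun heq i) k
      rwa [Matrix.mul_diagonal, Matrix.diagonal_mul] at this
    have hzz : z ^ p i * (star z) ^ q k = 1 := by
      have h1 : (z ^ p i * (star z) ^ q k) * (g : Matrix (Fin 3) (Fin 3) ℂ) i k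
          = 1 * (g : Matrix (Fin 3) (Fin 3) ℂ) i k := by
        linear_combination hentry
      exact mul_right_cancel₀ hgik h1
    have hstar : star z = z⁻¹ := by
      have hz1 : z * star z = 1 := by
        rw [Complex.star_def, Complex.mul_conj, Complex.normSq_eq_norm_sq, hz]
        norm_num
      exact (inv_eq_of_mul_eq_one_right hz1).symm
    rw [hstar, _root_.inv_zpow, ← _root_.zpow_neg] at hzz
    rw [Set.mem_setOf_eq, hn, sub_eq_add_neg, zpow_add₀ hz0]
    exact hzz
end

section
/- The T² biquotient action (z,w)·g = wᵃzᵖ g z̄^q w̄^b on SU(3) is almost free if and only if for every σ ∈ S₃, the vectors p − q_σ and a − b_σ in ℤ³ are linearly independent over ℝ. -/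
open Matrix Complex


lemma minor_of_li (v u : Fin 3 → ℤ)
    (h : LinearIndependent ℝ ![(fun i => (v i : ℝ)), (fun i => (u i : ℝ))]) :
    ∃ i j, v i * u j - v j * u i ≠ 0 := by
  by_contra hc
  push_neg at hc
  rw [LinearIndependent.pair_iff] at h
  by_cases hv : ∀ i, v i = 0
  · have := (h 1 0 (by funext i; simp [hv i])).1
    exact one_ne_zero this
  · push_neg at hv
    obtain ⟨i₀, hi₀⟩ := hv
    have := (h (u i₀ : ℝ) (-(v i₀ : ℝ)) ?_).2
    · exact hi₀ (by exact_mod_cast neg_eq_zero.mp this)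
    · funext j
      have hm := hc i₀ j
      have : ((v i₀ * u j - v j * u i₀ : ℤ) : ℝ) = 0 := by rw [hm]; simp
      push_cast at this
      simp only [Pi.add_apply, Pi.smul_apply, Matrix.cons_val_zero, Matrix.cons_val_one,
        Matrix.head_cons, smul_eq_mul, Pi.zero_apply]
      ring_nf
      ring_nf at this
      linarith

lemma int_relation (v u : Fin 3 → ℤ)
    (h : ¬ LinearIndependent ℝ ![(fun i => (v i : ℝ)), (fun i => (u i : ℝ))]) :
    ∃ m n : ℤ, ¬(m = 0 ∧ n = 0) ∧ ∀ i, m * v i + n * u i = 0 := by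
  rw [LinearIndependent.pair_iff] at h
  push_neg at h
  obtain ⟨s, t, hst, hne⟩ := h
  have hrel : ∀ i, s * (v i : ℝ) + t * (u i : ℝ) = 0 := by
    intro i
    have := congrFun hst i
    simpa [smul_eq_mul] using this
  have hminor : ∀ i j, v i * u j - v j * u i = 0 := by
    intro i j
    have hs : s ≠ 0 ∨ t ≠ 0 := by tauto
    have hr : ((v i * u j - v j * u i : ℤ) : ℝ) = 0 := by
      rcases hs with hs | ht
      · have h1 := hrel i; have h2 := hrel j
        have : s * ((v i * u j - v j * u i : ℤ) : ℝ) = 0 := by push_cast; linear_combination (u j : ℝ) * h1 - (u i : ℝ) * h2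
        exact (mul_eq_zero.mp this).resolve_left hs
      · have h1 := hrel i; have h2 := hrel j
        have : t * ((v i * u j - v j * u i : ℤ) : ℝ) = 0 := by push_cast; linear_combination (v i : ℝ) * h2 - (v j : ℝ) * h1
        exact (mul_eq_zero.mp this).resolve_left ht
    exact_mod_cast hr
  by_cases hv : ∀ i, v i = 0
  · exact ⟨1, 0, by simp, fun i => by simp [hv i]⟩
  · push_neg at hv
    obtain ⟨i₀, hi₀⟩ := hv
    refine ⟨-(u i₀), v i₀, by tauto, fun j => ?_⟩
    have := hminor i₀ j
    linarith


lemma rel_minor_pow (z w : ℂ) (hz : z ≠ 0) (hw : w ≠ 0) (vi ui vj uj : ℤ)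
    (hi : z ^ vi * w ^ ui = 1) (hj : z ^ vj * w ^ uj = 1) :
    z ^ (vi * uj - vj * ui) = 1 ∧ w ^ (vi * uj - vj * ui) = 1 := by
  have e1 : z ^ (vi * uj) * w ^ (ui * uj) = 1 := by
    rw [_root_.zpow_mul, _root_.zpow_mul, ← mul_zpow, hi, _root_.one_zpow]
  have e2 : z ^ (vj * ui) * w ^ (ui * uj) = 1 := by
    rw [mul_comm ui uj, _root_.zpow_mul, _root_.zpow_mul, ← mul_zpow, hj, _root_.one_zpow]
  have e3 : z ^ (vi * vj) * w ^ (ui * vj) = 1 := by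
    rw [_root_.zpow_mul, _root_.zpow_mul, ← mul_zpow, hi, _root_.one_zpow]
  have e4 : z ^ (vi * vj) * w ^ (uj * vi) = 1 := by
    rw [mul_comm vi vj, _root_.zpow_mul, _root_.zpow_mul, ← mul_zpow, hj, _root_.one_zpow]
  constructor
  · have hzz : z ^ (vi * uj) = z ^ (vj * ui) :=
      mul_right_cancel₀ (zpow_ne_zero _ hw) (e1.trans e2.symm)
    rw [zpow_sub₀ hz, hzz, div_self (zpow_ne_zero _ hz)]
  · have hww : w ^ (ui * vj) = w ^ (uj * vi) :=
      mul_left_cancel₀ (zpow_ne_zero _ hz) (e3.trans e4.symm)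
    rw [zpow_sub₀ hw, mul_comm vi uj, mul_comm vj ui, hww, mul_comm uj vi,
      div_self (zpow_ne_zero _ hw)]

lemma zpow_natAbs_eq_one (z : ℂ) (N : ℤ) (h : z ^ N = 1) : z ^ N.natAbs = 1 := by
  have h2 : z ^ (N.natAbs : ℤ) = 1 := by
    rcases Int.natAbs_eq N with h' | h'
    · rw [← h', h]
    · rw [show (N.natAbs : ℤ) = -N by omega, _root_.zpow_neg, h, inv_one]
  rwa [zpow_natCast] at h2

lemma finite_pow_roots (M : ℕ) (h : M ≠ 0) : {z : ℂ | z ^ M = 1}.Finite := by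
  have hsub : {z : ℂ | z ^ M = 1} ⊆ {z : ℂ | (Polynomial.X ^ M - Polynomial.C 1 : Polynomial ℂ).IsRoot z} := by
    intro z hz; simp [Polynomial.IsRoot, hz.out]
  exact (Polynomial.finite_setOf_isRoot (Polynomial.X_pow_sub_C_ne_zero (Nat.pos_of_ne_zero h) 1)).subset hsub

lemma stab_finite (p q a b : Fin 3 → ℤ)
    (hminor : ∀ σ : Equiv.Perm (Fin 3), ∃ i j,
      (p i - q (σ i)) * (a j - b (σ j)) - (p j - q (σ j)) * (a i - b (σ i)) ≠ 0)
    (g : Matrix.specialUnitaryGroup (Fin 3) ℂ) :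
    {zw : ℂ × ℂ | ‖zw.1‖ = 1 ∧ ‖zw.2‖ = 1 ∧
          Matrix.diagonal (fun i => zw.2 ^ a i * zw.1 ^ p i) *
              (g : Matrix (Fin 3) (Fin 3) ℂ) *
              Matrix.diagonal (fun i => (star zw.1) ^ q i * (star zw.2) ^ b i)
            = (g : Matrix (Fin 3) (Fin 3) ℂ)}.Finite := by
  classical
  choose I J hIJ using hminor
  set D : Equiv.Perm (Fin 3) → ℤ := fun σ =>
    (p (I σ) - q (σ (I σ))) * (a (J σ) - b (σ (J σ)))
      - (p (J σ) - q (σ (J σ))) * (a (I σ) - b (σ (I σ))) with hD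
  have hN : (∏ σ : Equiv.Perm (Fin 3), D σ) ≠ 0 :=
    Finset.prod_ne_zero_iff.mpr fun σ _ => hIJ σ
  set N : ℤ := ∏ σ : Equiv.Perm (Fin 3), D σ with hNdef
  have hM : N.natAbs ≠ 0 := Int.natAbs_ne_zero.mpr hN
  apply Set.Finite.subset (((finite_pow_roots N.natAbs hM).prod (finite_pow_roots N.natAbs hM)))
  rintro ⟨z, w⟩ ⟨h1, h2, heq⟩
  have hz : z ≠ 0 := by intro h0; rw [h0] at h1; simp at h1
  have hw : w ≠ 0 := by intro h0; rw [h0] at h2; simp at h2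
  set A : Matrix (Fin 3) (Fin 3) ℂ := (g : Matrix (Fin 3) (Fin 3) ℂ) with hA
  have hdet : A.det = 1 := (Matrix.mem_specialUnitaryGroup_iff.mp g.2).2
  -- find a permutation with nonzero entries
  have hσ : ∃ σ : Equiv.Perm (Fin 3), ∀ i, A (σ i) i ≠ 0 := by
    by_contra hcon
    push_neg at hcon
    have hz0 : A.det = 0 := by
      rw [Matrix.det_apply]
      apply Finset.sum_eq_zero
      intro σ _
      obtain ⟨i, hi⟩ := hcon σ
      rw [show (∏ k, A (σ k) k) = 0 from Finset.prod_eq_zero (Finset.mem_univ i) hi, smul_zero]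
    rw [hdet] at hz0
    exact one_ne_zero hz0
  obtain ⟨σ₀, hσ₀⟩ := hσ
  set τ : Equiv.Perm (Fin 3) := σ₀⁻¹ with hτ
  have hrel : ∀ j : Fin 3, z ^ (p j - q (τ j)) * w ^ (a j - b (τ j)) = 1 := by
    intro j
    have hAj : A j (τ j) ≠ 0 := by
      have := hσ₀ (τ j)
      simpa [hτ] using this
    have hc : (w ^ a j * z ^ p j) * A j (τ j) * ((star z) ^ q (τ j) * (star w) ^ b (τ j))
        = A j (τ j) := by
      have h3 : (Matrix.diagonal (fun i => w ^ a i * z ^ p i) * A *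
          Matrix.diagonal (fun i => (star z) ^ q i * (star w) ^ b i)) j (τ j) = A j (τ j) := by
        rw [heq]
      rwa [Matrix.mul_diagonal, Matrix.diagonal_mul] at h3
    have hone : (w ^ a j * z ^ p j) * ((star z) ^ q (τ j) * (star w) ^ b (τ j)) = 1 := by
      have hc2 : ((w ^ a j * z ^ p j) * ((star z) ^ q (τ j) * (star w) ^ b (τ j))) * A j (τ j)
          = 1 * A j (τ j) := by linear_combination hc
      exact mul_right_cancel₀ hAj hc2
    have hsz : (star z : ℂ) = z⁻¹ := by
      rw [Complex.star_def, ← Complex.inv_eq_conj h1]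
    have hsw : (star w : ℂ) = w⁻¹ := by
      rw [Complex.star_def, ← Complex.inv_eq_conj h2]
    rw [hsz, hsw, _root_.inv_zpow, _root_.inv_zpow, ← _root_.zpow_neg, ← _root_.zpow_neg] at hone
    rw [sub_eq_add_neg, sub_eq_add_neg, zpow_add₀ hz, zpow_add₀ hw]
    linear_combination hone
  have hpow := rel_minor_pow z w hz hw _ _ _ _ (hrel (I τ)) (hrel (J τ))
  have hdvd : D τ ∣ N := Finset.dvd_prod_of_mem D (Finset.mem_univ τ)
  obtain ⟨c, hc⟩ := hdvd
  have hzN : z ^ N = 1 := by rw [hc, _root_.zpow_mul, hpow.1, _root_.one_zpow]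
  have hwN : w ^ N = 1 := by rw [hc, _root_.zpow_mul, hpow.2, _root_.one_zpow]
  exact ⟨zpow_natAbs_eq_one z N hzN, zpow_natAbs_eq_one w N hwN⟩


lemma exp_inj_small (k : ℤ) (hk : k ≠ 0) (θ₁ θ₂ : ℝ)
    (hb : |θ₁ - θ₂| * |(k : ℝ)| < 2 * Real.pi)
    (h : Complex.exp (((k : ℝ) * θ₁ : ℝ) * Complex.I)
       = Complex.exp (((k : ℝ) * θ₂ : ℝ) * Complex.I)) : θ₁ = θ₂ := by
  rw [Complex.exp_eq_exp_iff_exists_int] at h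
  obtain ⟨j, hj⟩ := h
  have h2 : (((k : ℝ) * θ₁ : ℝ) : ℂ) = (((k : ℝ) * θ₂ : ℝ) : ℂ) + (j : ℂ) * (2 * (Real.pi : ℂ)) :=
    mul_right_cancel₀ Complex.I_ne_zero (by push_cast at hj ⊢; linear_combination hj)
  have hr : (k : ℝ) * θ₁ = (k : ℝ) * θ₂ + (j : ℝ) * (2 * Real.pi) := by
    exact_mod_cast h2
  rcases eq_or_ne j 0 with hj0 | hj0
  · rw [hj0] at hr
    simp at hr
    exact hr.resolve_right hk
  · exfalso
    have hj1 : (1 : ℝ) ≤ |(j : ℝ)| := by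
      have : (1 : ℤ) ≤ |j| := Int.one_le_abs hj0
      calc (1:ℝ) ≤ (|j| : ℤ) := by exact_mod_cast this
        _ = |(j : ℝ)| := by push_cast; ring
    have habs : |θ₁ - θ₂| * |(k : ℝ)| = |(j : ℝ)| * (2 * Real.pi) := by
      rw [← abs_mul]
      have : (θ₁ - θ₂) * (k : ℝ) = (j : ℝ) * (2 * Real.pi) := by linarith [hr]
      rw [this, abs_mul, abs_of_pos (by positivity : (0:ℝ) < 2 * Real.pi)]
    nlinarith [Real.pi_pos]

lemma exists_infinite_stab (p q a b : Fin 3 → ℤ) (σ : Equiv.Perm (Fin 3)) (m n : ℤ)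
    (hmn : ¬(m = 0 ∧ n = 0))
    (hrel : ∀ i, m * (p i - q (σ i)) + n * (a i - b (σ i)) = 0) :
    ∃ g : Matrix.specialUnitaryGroup (Fin 3) ℂ,
      ¬ {zw : ℂ × ℂ | ‖zw.1‖ = 1 ∧ ‖zw.2‖ = 1 ∧
          Matrix.diagonal (fun i => zw.2 ^ a i * zw.1 ^ p i) *
              (g : Matrix (Fin 3) (Fin 3) ℂ) *
              Matrix.diagonal (fun i => (star zw.1) ^ q i * (star zw.2) ^ b i)
            = (g : Matrix (Fin 3) (Fin 3) ℂ)}.Finite := by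
  classical
  set ε : ℂ := ((Equiv.Perm.sign σ : ℤ) : ℂ) with hε
  have hsgn : ((Equiv.Perm.sign σ : ℤ)) = 1 ∨ ((Equiv.Perm.sign σ : ℤ)) = -1 :=
    Int.isUnit_iff.mp (Equiv.Perm.sign σ).isUnit
  have hε1 : ε = 1 ∨ ε = -1 := by
    rcases hsgn with h | h <;> [left; right] <;> rw [hε, h] <;> push_cast <;> ring
  have hεsq : ε * ε = 1 := by rcases hε1 with h | h <;> rw [h] <;> ring
  set c : Fin 3 → ℂ := fun i => if i = 0 then ε else 1 with hc
  have hstar : (starRingEnd ℂ) ε = ε := by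
    rcases hε1 with h | h
    · rw [h]; simp
    · rw [h]; simp
  have hcsq : ∀ i, c i * (starRingEnd ℂ) (c i) = 1 := by
    intro i
    by_cases hi : i = 0
    · simp only [hc, if_pos hi]
      rw [hstar]; exact hεsq
    · simp only [hc, if_neg hi]
      simp
  set A : Matrix (Fin 3) (Fin 3) ℂ := Matrix.diagonal c * σ.permMatrix ℂ with hA
  have hperm : ∀ i j, σ.permMatrix ℂ i j = if σ i = j then 1 else 0 := by
    intro i j
    simp [Equiv.Perm.permMatrix, PEquiv.toMatrix, Equiv.toPEquiv, eq_comm]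
  have hAe : ∀ i j, A i j = if σ i = j then c i else 0 := by
    intro i j
    rw [hA, Matrix.diagonal_mul, hperm]
    split <;> ring
  have hmem : A ∈ Matrix.specialUnitaryGroup (Fin 3) ℂ := by
    rw [Matrix.mem_specialUnitaryGroup_iff]
    constructor
    · rw [Matrix.mem_unitaryGroup_iff]
      ext i k
      rw [Matrix.mul_apply]
      simp only [Matrix.star_apply, Matrix.one_apply, hAe]
      rw [Finset.sum_eq_single (σ i)]
      · simp only [if_pos rfl]
        by_cases hik : i = k
        · subst hik; simp [hcsq i]
        · have : ¬ (σ k = σ i) := fun hcon => hik (σ.injective hcon).symm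
          simp [this, hik]
      · intro j _ hj
        rw [if_neg (fun hcon => hj hcon.symm)]
        ring
      · intro hmem; exact absurd (Finset.mem_univ (σ i)) hmem
    · rw [hA, Matrix.det_mul, Matrix.det_diagonal, Matrix.det_permutation,
        Fin.prod_univ_three]
      rw [hc]; simp only [if_pos rfl, if_neg (by decide : ¬ (1:Fin 3) = 0),
        if_neg (by decide : ¬ (2:Fin 3) = 0)]
      rw [mul_one, mul_one]
      exact hεsq
  refine ⟨⟨A, hmem⟩, ?_⟩
  intro hfin
  have hk : m ≠ 0 ∨ n ≠ 0 := by tauto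
  set δ : ℝ := 1 / (|(m:ℝ)| + |(n:ℝ)| + 1) with hδ
  have hδpos : 0 < δ := by rw [hδ]; positivity
  set f : ℝ → ℂ × ℂ := fun θ =>
    (Complex.exp (((m:ℝ) * θ : ℝ) * Complex.I), Complex.exp (((n:ℝ) * θ : ℝ) * Complex.I)) with hf
  have hmapsto : Set.MapsTo f (Set.Ioo 0 δ) {zw : ℂ × ℂ | ‖zw.1‖ = 1 ∧ ‖zw.2‖ = 1 ∧
          Matrix.diagonal (fun i => zw.2 ^ a i * zw.1 ^ p i) * A *
              Matrix.diagonal (fun i => (star zw.1) ^ q i * (star zw.2) ^ b i) = A} := by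
    intro θ _
    refine ⟨Complex.norm_exp_ofReal_mul_I _, Complex.norm_exp_ofReal_mul_I _, ?_⟩
    ext i j
    rw [Matrix.mul_diagonal, Matrix.diagonal_mul, hAe]
    by_cases hσij : σ i = j
    · rw [if_pos hσij, ← hσij]
      have hstm : star (Complex.exp (((m:ℝ) * θ : ℝ) * Complex.I))
          = Complex.exp (-((((m:ℝ) * θ : ℝ) : ℂ) * Complex.I)) := by
        rw [Complex.star_def, ← Complex.exp_conj]
        congr 1
        simp [Complex.conj_I]
      have hstn : star (Complex.exp (((n:ℝ) * θ : ℝ) * Complex.I))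
          = Complex.exp (-((((n:ℝ) * θ : ℝ) : ℂ) * Complex.I)) := by
        rw [Complex.star_def, ← Complex.exp_conj]
        congr 1
        simp [Complex.conj_I]
      have hone : (Complex.exp (((n:ℝ) * θ : ℝ) * Complex.I) ^ a i *
            Complex.exp (((m:ℝ) * θ : ℝ) * Complex.I) ^ p i) *
          ((star (Complex.exp (((m:ℝ) * θ : ℝ) * Complex.I))) ^ q (σ i) *
            (star (Complex.exp (((n:ℝ) * θ : ℝ) * Complex.I))) ^ b (σ i)) = 1 := by
        rw [hstm, hstn, ← Complex.exp_int_mul, ← Complex.exp_int_mul,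
          ← Complex.exp_int_mul, ← Complex.exp_int_mul,
          ← Complex.exp_add, ← Complex.exp_add, ← Complex.exp_add, ← Complex.exp_zero]
        congr 1
        have h0 : ((m : ℂ) * ((p i : ℂ) - (q (σ i) : ℂ)) + (n : ℂ) * ((a i : ℂ) - (b (σ i) : ℂ))) = 0 := by
          exact_mod_cast congrArg (Int.cast : ℤ → ℂ) (hrel i)
        push_cast
        linear_combination (θ : ℂ) * Complex.I * h0
      simp only [hf]
      linear_combination (c i) * hone
    · rw [if_neg hσij]
      simp
  have hinj : Set.InjOn f (Set.Ioo 0 δ) := by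
    intro θ₁ h₁ θ₂ h₂ hfe
    have hbound : |θ₁ - θ₂| < δ := by
      rw [abs_sub_lt_iff]
      exact ⟨by linarith [h₁.1, h₁.2, h₂.1, h₂.2], by linarith [h₁.1, h₁.2, h₂.1, h₂.2]⟩
    have hpi : (3:ℝ) < Real.pi := Real.pi_gt_three
    have habsm : (0:ℝ) ≤ |(m:ℝ)| := abs_nonneg _
    have habsn : (0:ℝ) ≤ |(n:ℝ)| := abs_nonneg _
    have hsum : (0:ℝ) < |(m:ℝ)| + |(n:ℝ)| + 1 := by linarith
    have hδe : δ * (|(m:ℝ)| + |(n:ℝ)| + 1) = 1 := by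
      rw [hδ]; field_simp
    have h1 : |θ₁ - θ₂| * (|(m:ℝ)| + |(n:ℝ)| + 1) < δ * (|(m:ℝ)| + |(n:ℝ)| + 1) :=
      mul_lt_mul_of_pos_right hbound hsum
    rcases hk with hm | hn
    · have hfst := congrArg Prod.fst hfe
      apply exp_inj_small m hm θ₁ θ₂ ?_ hfst
      have h2 : |θ₁ - θ₂| * |(m:ℝ)| ≤ |θ₁ - θ₂| * (|(m:ℝ)| + |(n:ℝ)| + 1) :=
        mul_le_mul_of_nonneg_left (by linarith) (abs_nonneg _)
      linarith
    · have hsnd := congrArg Prod.snd hfe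
      apply exp_inj_small n hn θ₁ θ₂ ?_ hsnd
      have h2 : |θ₁ - θ₂| * |(n:ℝ)| ≤ |θ₁ - θ₂| * (|(m:ℝ)| + |(n:ℝ)| + 1) :=
        mul_le_mul_of_nonneg_left (by linarith) (abs_nonneg _)
      linarith
  have := Set.infinite_of_injOn_mapsTo hinj hmapsto (Set.infinite_coe_iff.mp (Set.Ioo.infinite hδpos))
  exact this hfin


/-- The T² biquotient action (z,w)·g = wᵃzᵖ g z̄^q w̄^b on SU(3) is almost free if and only
if for every σ ∈ S₃ the vectors p − q_σ and a − b_σ in ℤ³ are linearly independent over ℝ. -/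
theorem torus_action_almost_free_iff (p q a b : Fin 3 → ℤ)
    (hsum₁ : ∑ i, p i = ∑ i, q i) (hsum₂ : ∑ i, a i = ∑ i, b i) :
    (∀ g : Matrix.specialUnitaryGroup (Fin 3) ℂ,
        {zw : ℂ × ℂ | ‖zw.1‖ = 1 ∧ ‖zw.2‖ = 1 ∧
          Matrix.diagonal (fun i => zw.2 ^ a i * zw.1 ^ p i) *
              (g : Matrix (Fin 3) (Fin 3) ℂ) *
              Matrix.diagonal (fun i => (star zw.1) ^ q i * (star zw.2) ^ b i)
            = (g : Matrix (Fin 3) (Fin 3) ℂ)}.Finite)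
    ↔ (∀ σ : Equiv.Perm (Fin 3),
        LinearIndependent ℝ
          ![(fun i => ((p i - q (σ i) : ℤ) : ℝ)), (fun i => ((a i - b (σ i) : ℤ) : ℝ))]) := by
  constructor
  · intro hfin σ
    by_contra hind
    obtain ⟨m, n, hmn, hrel⟩ :=
      int_relation (fun i => p i - q (σ i)) (fun i => a i - b (σ i)) hind
    obtain ⟨g, hg⟩ := exists_infinite_stab p q a b σ m n hmn hrel
    exact hg (hfin g)
  · intro h g
    apply stab_finite p q a b ?_ g
    intro σ
    exact minor_of_li (fun i => p i - q (σ i)) (fun i => a i - b (σ i)) (h σ)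
end

section
/- Fix σ ∈ S₃ and integers x,y,z,w,s with x(p₁−q_{σ(2)}) − y(p₂−q_{σ(3)}) = ε₁ and w(p₁−q_{σ(3)}) − z(p₂−q_{σ(1)}) = ε₂ where ε₁,ε₂ ∈ {±1}. Then with h = (p₁−q_{σ(2)})(p₁−q_{σ(3)}) − (p₂−q_{σ(1)})(p₃−q_{σ(1)}) (using Σpᵢ=Σqᵢ), the determinant (p₁−q_{σ(1)})(a₂−b_{σ(2)}) − (p₂−q_{σ(2)})(a₁−b_{σ(1)}) for a = (−z, −x−s(p₂−q_{σ(3)}), y+w+s(p₁−q_{σ(2)})), b_σ = (w−x−s(p₂−q_{σ(3)}), y−z+s(p₁−q_{σ(2)}), 0) equals ±(s·h + (x+y−z)(p₁−q_{σ(1)}) − (w+z−x)(p₂−q_{σ(2)})). -/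
/-- With Bézout data x, y, z, w solving the two equations, a = (−z, −x−s(p₂−q_{σ(3)}),
y+w+s(p₁−q_{σ(2)})) and b_σ = (w−x−s(p₂−q_{σ(3)}), y−z+s(p₁−q_{σ(2)}), 0), the determinant
(p₁−q_{σ(1)})(a₂−b_{σ(2)}) − (p₂−q_{σ(2)})(a₁−b_{σ(1)}) equals, up to sign,
s·h + (x+y−z)(p₁−q_{σ(1)}) − (w+z−x)(p₂−q_{σ(2)}), where
h = (p₁−q_{σ(2)})(p₁−q_{σ(3)}) − (p₂−q_{σ(1)})(p₃−q_{σ(1)}). -/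
theorem kappa_sigma_formula (p q a b : Fin 3 → ℤ) (σ : Equiv.Perm (Fin 3))
    (x y z w s ε₁ ε₂ h : ℤ)
    (hsum : ∑ i, p i = ∑ i, q i)
    (hε₁ : ε₁ = 1 ∨ ε₁ = -1) (hε₂ : ε₂ = 1 ∨ ε₂ = -1)
    (hbez₁ : x * (p 0 - q (σ 1)) - y * (p 1 - q (σ 2)) = ε₁)
    (hbez₂ : w * (p 0 - q (σ 2)) - z * (p 1 - q (σ 0)) = ε₂)
    (hh : h = (p 0 - q (σ 1)) * (p 0 - q (σ 2)) - (p 1 - q (σ 0)) * (p 2 - q (σ 0)))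
    (ha : a = ![-z, -x - s * (p 1 - q (σ 2)), y + w + s * (p 0 - q (σ 1))])
    (hb₀ : b (σ 0) = w - x - s * (p 1 - q (σ 2)))
    (hb₁ : b (σ 1) = y - z + s * (p 0 - q (σ 1)))
    (hb₂ : b (σ 2) = 0) :
    (p 0 - q (σ 0)) * (a 1 - b (σ 1)) - (p 1 - q (σ 1)) * (a 0 - b (σ 0))
        = (s * h + (x + y - z) * (p 0 - q (σ 0)) - (w + z - x) * (p 1 - q (σ 1)))
      ∨ (p 0 - q (σ 0)) * (a 1 - b (σ 1)) - (p 1 - q (σ 1)) * (a 0 - b (σ 0))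
        = -(s * h + (x + y - z) * (p 0 - q (σ 0)) - (w + z - x) * (p 1 - q (σ 1))) := by
  right
  have hq : q (σ 0) + q (σ 1) + q (σ 2) = p 0 + p 1 + p 2 := by
    have h1 := Equiv.sum_comp σ q
    rw [Fin.sum_univ_three] at h1 hsum
    omega
  subst ha hh
  simp only [Matrix.cons_val_zero, Matrix.cons_val_one, Matrix.head_cons]
  rw [hb₀, hb₁]
  linear_combination s * (p 1 - q (σ 0)) * hq
end

section
/- The value α(σ,ε₁,ε₂) := ((x+y−z)(p₁−q_{σ(1)}) − (w+z−x)(p₂−q_{σ(2)}) + 1) mod h is independent of the choice of solution (x,y,z,w) of the Bézout equations x(p₁−q_{σ(2)}) − y(p₂−q_{σ(3)}) = ε₁ and w(p₁−q_{σ(3)}) − z(p₂−q_{σ(1)}) = ε₂. -/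
private lemma bezout_diff (a b u v u' v' e : ℤ) (he : e = 1 ∨ e = -1)
    (h : u * a - v * b = e) (h' : u' * a - v' * b = e) :
    ∃ k : ℤ, u' - u = k * b ∧ v' - v = k * a := by
  have hee : e * e = 1 := by rcases he with rfl | rfl <;> norm_num
  have hd : (u' - u) * a = (v' - v) * b := by linear_combination h' - h
  by_cases hb : b = 0
  · -- then a is a unit
    have ha1 : a * (u * e) = 1 := by
      have : u * a = e := by rw [hb] at h; linarith
      linear_combination e * this + hee - u * a * e + a * u * e
    have hane : a ≠ 0 := by
      intro h0; rw [h0] at ha1; simp at ha1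
    refine ⟨(v' - v) * u * e, ?_, ?_⟩
    · have : (u' - u) * a = 0 := by rw [hd, hb]; ring
      have : u' - u = 0 := by
        rcases mul_eq_zero.mp this with h1 | h1
        · exact h1
        · exact absurd h1 hane
      rw [this, hb]; ring
    · calc v' - v = (v' - v) * (a * (u * e)) := by rw [ha1]; ring
        _ = (v' - v) * u * e * a := by ring
  · have hco : IsCoprime a b := by
      rcases he with rfl | rfl
      · exact ⟨u, -v, by linarith⟩
      · exact ⟨-u, v, by linarith⟩
    have hdvd : b ∣ (u' - u) := by
      have : b ∣ (u' - u) * a := ⟨v' - v, by linarith [hd]⟩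
      exact (hco.symm.dvd_of_dvd_mul_right this)
    obtain ⟨k, hk⟩ := hdvd
    refine ⟨k, by rw [hk]; ring, ?_⟩
    have : (v' - v) * b = k * a * b := by rw [← hd, hk]; ring
    exact mul_right_cancel₀ hb this

/-- The value α(σ,ε₁,ε₂) = ((x+y−z)(p₁−q_{σ(1)}) − (w+z−x)(p₂−q_{σ(2)}) + 1) mod h
is independent of the choice of solution (x,y,z,w) of the Bézout equations
x(p₁−q_{σ(2)}) − y(p₂−q_{σ(3)}) = ε₁ and w(p₁−q_{σ(3)}) − z(p₂−q_{σ(1)}) = ε₂. -/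
theorem alpha_well_defined (p q : Fin 3 → ℤ) (σ : Equiv.Perm (Fin 3))
    (ε₁ ε₂ : ℤ)
    (hsum : ∑ i, p i = ∑ i, q i)
    (hfree : ∀ i i' j j' : Fin 3, i ≠ i' → j ≠ j' → Int.gcd (p i - q j) (p i' - q j') = 1)
    (hε₁ : ε₁ = 1 ∨ ε₁ = -1) (hε₂ : ε₂ = 1 ∨ ε₂ = -1)
    (x y z w x' y' z' w' : ℤ)
    (hbez₁ : x * (p 0 - q (σ 1)) - y * (p 1 - q (σ 2)) = ε₁)
    (hbez₂ : w * (p 0 - q (σ 2)) - z * (p 1 - q (σ 0)) = ε₂)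
    (hbez₁' : x' * (p 0 - q (σ 1)) - y' * (p 1 - q (σ 2)) = ε₁)
    (hbez₂' : w' * (p 0 - q (σ 2)) - z' * (p 1 - q (σ 0)) = ε₂) :
    ((x + y - z) * (p 0 - q (σ 0)) - (w + z - x) * (p 1 - q (σ 1)) + 1)
      ≡ ((x' + y' - z') * (p 0 - q (σ 0)) - (w' + z' - x') * (p 1 - q (σ 1)) + 1)
      [ZMOD ((p 0 * p 1 + p 0 * p 2 + p 1 * p 2
              - q 0 * q 1 - q 0 * q 2 - q 1 * q 2).natAbs : ℤ)] := by
  obtain ⟨k₁, hk₁x, hk₁y⟩ := bezout_diff _ _ _ _ _ _ _ hε₁ hbez₁ hbez₁'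
  obtain ⟨k₂, hk₂w, hk₂z⟩ := bezout_diff _ _ _ _ _ _ _ hε₂ hbez₂ hbez₂'
  -- σ permutes q: symmetric functions agree
  have h1 : ∑ i, q (σ i) = ∑ i, q i := Equiv.sum_comp σ q
  have h2 : ∑ i, (q (σ i))^2 = ∑ i, (q i)^2 := Equiv.sum_comp σ (fun i => (q i)^2)
  simp only [Fin.sum_univ_three] at h1 h2 hsum
  have hsum' : q (σ 0) + q (σ 1) + q (σ 2) = p 0 + p 1 + p 2 := by linarith
  have hq2 : q (σ 0) * q (σ 1) + q (σ 0) * q (σ 2) + q (σ 1) * q (σ 2)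
      = q 0 * q 1 + q 0 * q 2 + q 1 * q 2 := by
    have h2' : 2 * (q (σ 0) * q (σ 1) + q (σ 0) * q (σ 2) + q (σ 1) * q (σ 2))
        = 2 * (q 0 * q 1 + q 0 * q 2 + q 1 * q 2) := by
      linear_combination (q (σ 0) + q (σ 1) + q (σ 2) + q 0 + q 1 + q 2) * h1 - h2
    linarith
  set H : ℤ := p 0 * p 1 + p 0 * p 2 + p 1 * p 2
      - q 0 * q 1 - q 0 * q 2 - q 1 * q 2 with hH
  have key1 : (p 0 - q (σ 1)) * (p 0 - q (σ 0)) + (p 1 - q (σ 2)) * (p 0 - q (σ 0))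
      + (p 1 - q (σ 2)) * (p 1 - q (σ 1)) = -H := by
    rw [hH]; linear_combination (-(p 0 + p 1)) * hsum' + hq2
  have key2 : (p 0 - q (σ 2)) * (p 0 - q (σ 0)) + (p 0 - q (σ 2)) * (p 1 - q (σ 1))
      + (p 1 - q (σ 0)) * (p 1 - q (σ 1)) = -H := by
    rw [hH]; linear_combination (-(p 0 + p 1)) * hsum' + hq2
  have hdvd : H ∣ (((x' + y' - z') * (p 0 - q (σ 0)) - (w' + z' - x') * (p 1 - q (σ 1)) + 1)
      - ((x + y - z) * (p 0 - q (σ 0)) - (w + z - x) * (p 1 - q (σ 1)) + 1)) := by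
    refine ⟨k₂ - k₁, ?_⟩
    have e1 : x' = x + k₁ * (p 1 - q (σ 2)) := by linarith
    have e2 : y' = y + k₁ * (p 0 - q (σ 1)) := by linarith
    have e3 : w' = w + k₂ * (p 1 - q (σ 0)) := by linarith
    have e4 : z' = z + k₂ * (p 0 - q (σ 2)) := by linarith
    rw [e1, e2, e3, e4]
    linear_combination k₁ * key1 - k₂ * key2
  exact (Int.modEq_iff_dvd).mpr (Int.natAbs_dvd.mpr hdvd)
end

section
/- For positively curved Eschenburg data (two rows or two columns of the matrix A_{ij} = pᵢ − qⱼ have all entries of the same sign), the positivity condition (1.5) implies the almost-free condition p − q_σ ≠ 0 for all σ ∈ S₃. -/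
/-- The positivity condition (1.5): for each i, either pᵢ lies outside
[min q, max q] or qᵢ lies outside [min p, max p]. -/
def eschPositive (p q : Fin 3 → ℤ) : Prop :=
  ∀ i : Fin 3,
    (p i < min (q 0) (min (q 1) (q 2)) ∨ max (q 0) (max (q 1) (q 2)) < p i) ∨
    (q i < min (p 0) (min (p 1) (p 2)) ∨ max (p 0) (max (p 1) (p 2)) < q i)

/-- The positivity condition (1.5) implies the almost-free condition p − q_σ ≠ 0
for all σ ∈ S₃. -/
theorem positive_implies_almost_free (p q : Fin 3 → ℤ)
    (hsum : ∑ i, p i = ∑ i, q i) (hpos : eschPositive p q) :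
    ∀ σ : Equiv.Perm (Fin 3), ∃ i, p i - q (σ i) ≠ 0 := by
  intro σ
  by_contra h
  push_neg at h
  have e : ∀ i, p i = q (σ i) := fun i => by have := h i; omega
  have hq : ∀ j : Fin 3, min (q 0) (min (q 1) (q 2)) ≤ q j ∧
      q j ≤ max (q 0) (max (q 1) (q 2)) := by
    intro j; fin_cases j <;> constructor <;> simp
  have hp : ∀ j : Fin 3, min (p 0) (min (p 1) (p 2)) ≤ p j ∧
      p j ≤ max (p 0) (max (p 1) (p 2)) := by
    intro j; fin_cases j <;> constructor <;> simp
  have e' : ∀ i, q i = p (σ.symm i) := fun i => by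
    have := e (σ.symm i); simpa using this.symm
  have h1 := hpos 0
  have h2 := hq (σ 0)
  have h3 := hp (σ.symm 0)
  have := e 0
  have := e' 0
  omega
end
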